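/- Let X = (X_{ij}) be an m×n array of independent geometric random variables with P(X_{ij} = k) = (1 − α_i β_j)(α_i β_j)^k where 0 < α_i β_j < 1, let c ∈ ℕ^n, and for j = 1,…,n let C_j = (C_{1j},…,C_{mj}) be independent random vectors where C_j is distributed as (X_{1j},…,X_{mj}) conditioned on Σ_i X_{ij} = c_j (assumed to be an event of positive probability). Then for any r ∈ ℕ^m with Σ_i r_i = Σ_j c_j, the law of C = (C_1,…,C_n) conditioned on the event that Σ_j C_{ij} = r_i for all i is the uniform distribution on the set of (r,c)-contingency tables. -/

import Mathlib

/-!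
A table `ξ` whose column sums are `c` has `ν`-mass
`∏ⱼ Zⱼ⁻¹ · ∏ᵢⱼ (1 - αᵢβⱼ) (αᵢβⱼ)^ξᵢⱼ`, where `Zⱼ` is the probability that the `j`-th geometric
column sums to `cⱼ`; every other table has mass `0`. On `(r,c)`-tables the powers multiply out to
`∏ᵢ αᵢ^rᵢ · ∏ⱼ βⱼ^cⱼ`, so all of them carry the same positive mass, and conditioning on the row
sums yields the uniform law.
-/

open MeasureTheory ProbabilityTheory ENNReal

/-- The set of `(r,c)`-contingency tables: `m × n` matrices of nonnegative integers with
row sums `r` and column sums `c`. -/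
def contingencyTables (m n : ℕ) (r : Fin m → ℕ) (c : Fin n → ℕ) :
    Set (Fin m → Fin n → ℕ) :=
  {ξ | (∀ i, ∑ j, ξ i j = r i) ∧ (∀ j, ∑ i, ξ i j = c j)}

section ContingencyTables

variable {m n : ℕ}

theorem contingencyTables_finite (r : Fin m → ℕ) (c : Fin n → ℕ) :
    (contingencyTables m n r c).Finite := by
  refine (Set.Finite.pi fun _ => Set.Finite.pi fun j => Set.finite_Iic (c j)).subset ?_
  intro ξ hξ i _ j _
  exact (Finset.single_le_sum (fun i' _ => Nat.zero_le (ξ i' j)) (Finset.mem_univ i)).trans_eq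
    (hξ.2 j)

theorem prod_prod_mul_pow_eq_of_mem_contingencyTables {M : Type*} [CommMonoid M]
    {r : Fin m → ℕ} {c : Fin n → ℕ} (a : Fin m → M) (b : Fin n → M) {ξ : Fin m → Fin n → ℕ}
    (hξ : ξ ∈ contingencyTables m n r c) :
    ∏ j, ∏ i, (a i * b j) ^ ξ i j = (∏ i, a i ^ r i) * ∏ j, b j ^ c j := by
  simp_rw [mul_pow, Finset.prod_mul_distrib, Finset.prod_pow_eq_pow_sum, hξ.2]
  rw [Finset.prod_comm]
  simp_rw [Finset.prod_pow_eq_pow_sum, hξ.1]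

end ContingencyTables

section GeometricWeight

variable {m n : ℕ}

def geomWeight (α : Fin m → ℝ) (β : Fin n → ℝ) (ξ : Fin m → Fin n → ℕ) : ℝ :=
  ∏ j, ∏ i, (1 - α i * β j) * (α i * β j) ^ ξ i j

variable {α : Fin m → ℝ} {β : Fin n → ℝ}

theorem geomWeight_pos (hαβ0 : ∀ i j, 0 < α i * β j) (hαβ1 : ∀ i j, α i * β j < 1)
    (ξ : Fin m → Fin n → ℕ) : 0 < geomWeight α β ξ :=
  Finset.prod_pos fun j _ => Finset.prod_pos fun i _ =>
    mul_pos (sub_pos.2 (hαβ1 i j)) (pow_pos (hαβ0 i j) _)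

theorem ofReal_geomWeight (hαβ0 : ∀ i j, 0 < α i * β j) (hαβ1 : ∀ i j, α i * β j < 1)
    (ξ : Fin m → Fin n → ℕ) :
    ENNReal.ofReal (geomWeight α β ξ) =
      ∏ j, ∏ i, ENNReal.ofReal ((1 - α i * β j) * (α i * β j) ^ ξ i j) := by
  have hcell : ∀ i j, 0 ≤ (1 - α i * β j) * (α i * β j) ^ ξ i j := fun i j =>
    mul_nonneg (sub_nonneg.2 (hαβ1 i j).le) (pow_nonneg (hαβ0 i j).le _)
  rw [geomWeight,
    ENNReal.ofReal_prod_of_nonneg fun j _ => Finset.prod_nonneg fun i _ => hcell i j]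
  exact Finset.prod_congr rfl fun j _ => ENNReal.ofReal_prod_of_nonneg fun i _ => hcell i j

theorem geomWeight_eq_of_mem_contingencyTables {r : Fin m → ℕ} {c : Fin n → ℕ}
    {ξ ξ' : Fin m → Fin n → ℕ} (hξ : ξ ∈ contingencyTables m n r c)
    (hξ' : ξ' ∈ contingencyTables m n r c) : geomWeight α β ξ = geomWeight α β ξ' := by
  simp_rw [geomWeight, Finset.prod_mul_distrib,
    prod_prod_mul_pow_eq_of_mem_contingencyTables α β hξ,
    prod_prod_mul_pow_eq_of_mem_contingencyTables α β hξ']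

end GeometricWeight

section CondSingleton

variable {Ω : Type*} [MeasurableSpace Ω] {μ : Measure Ω} {s : Set Ω} {ω : Ω}

theorem cond_singleton_of_mem (hs : MeasurableSet s) (hω : ω ∈ s) :
    μ[|s] {ω} = (μ s)⁻¹ * μ {ω} := by
  rw [cond_apply hs, Set.inter_eq_self_of_subset_right (Set.singleton_subset_iff.2 hω)]

theorem cond_singleton_of_notMem (hs : MeasurableSet s) (hω : ω ∉ s) : μ[|s] {ω} = 0 := by
  rw [cond_apply hs, Set.inter_singleton_eq_empty.2 hω, measure_empty, mul_zero]

theorem cond_singleton_eq_inv_ncard [MeasurableSingletonClass Ω] [Countable Ω] {E S : Set Ω}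
    (hS : S.Finite) (hSE : S ⊆ E) (hnull : ∀ x ∈ E \ S, μ {x} = 0) {K : ℝ≥0∞} (hK0 : K ≠ 0)
    (hKtop : K ≠ ∞) (hconst : ∀ x ∈ S, μ {x} = K) (hω : ω ∈ S) :
    μ[|E] {ω} = (S.ncard : ℝ≥0∞)⁻¹ := by
  have hμE : μ E = S.ncard * K := by
    rw [← measure_eq_measure_of_null_sdiff hSE
        ((measure_null_iff_singleton (E \ S).to_countable).2 hnull),
      ← hS.coe_toFinset, ← sum_measure_singleton,
      Finset.sum_congr rfl fun x hx => hconst x (hS.mem_toFinset.1 hx), Finset.sum_const,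
      nsmul_eq_mul, Set.ncard_coe_finset]
  rw [cond_singleton_of_mem .of_discrete (hSE hω), hμE, hconst ω hω,
    ENNReal.mul_inv (Or.inr hKtop) (Or.inl (natCast_ne_top _)), mul_assoc,
    ENNReal.inv_mul_cancel hK0 hKtop, mul_one]

end CondSingleton

theorem stmt_2_general (m n : ℕ) (r : Fin m → ℕ) (c : Fin n → ℕ)
    (α : Fin m → ℝ) (β : Fin n → ℝ)
    (hαβ0 : ∀ i j, 0 < α i * β j) (hαβ1 : ∀ i j, α i * β j < 1)
    -- `μcol j` is the law of the `j`-th column of the array of independent geometrics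
    (μcol : Fin n → Measure (Fin m → ℕ)) (hcolprob : ∀ j, IsProbabilityMeasure (μcol j))
    (hμcol : ∀ j, ∀ v : Fin m → ℕ,
      μcol j {v} = ∏ i, ENNReal.ofReal ((1 - α i * β j) * (α i * β j) ^ (v i)))
    -- the conditioning events have positive probability
    (hpos : ∀ j, 0 < μcol j {v | ∑ i, v i = c j})
    -- `ν` is the joint law of the independent columns `C j`, where `C j` has the law of the
    -- `j`-th column conditioned on its sum being `c j`
    (ν : Measure (Fin m → Fin n → ℕ))
    (hν : ∀ ξ : Fin m → Fin n → ℕ,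
      ν {ξ} = ∏ j, (μcol j)[|{v | ∑ i, v i = c j}] {fun i => ξ i j}) :
    ∀ ξ ∈ contingencyTables m n r c,
      ν[|{ξ : Fin m → Fin n → ℕ | ∀ i, ∑ j, ξ i j = r i}] {ξ}
        = ((contingencyTables m n r c).ncard : ℝ≥0∞)⁻¹ := by
  intro ξ₀ hξ₀
  set Z : Fin n → ℝ≥0∞ := fun j => μcol j {v | ∑ i, v i = c j}
  have hν_col : ∀ ξ : Fin m → Fin n → ℕ, (∀ j, ∑ i, ξ i j = c j) →
      ν {ξ} = (∏ j, (Z j)⁻¹) * ENNReal.ofReal (geomWeight α β ξ) := by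
    intro ξ hcol
    rw [hν, ofReal_geomWeight hαβ0 hαβ1, ← Finset.prod_mul_distrib]
    refine Finset.prod_congr rfl fun j _ => ?_
    rw [cond_singleton_of_mem (s := {v : Fin m → ℕ | ∑ i, v i = c j}) .of_discrete (hcol j),
      hμcol]
  have hν_not_col : ∀ ξ : Fin m → Fin n → ℕ, (∃ j, ∑ i, ξ i j ≠ c j) → ν {ξ} = 0 := by
    rintro ξ ⟨j, hj⟩
    rw [hν, Finset.prod_eq_zero (Finset.mem_univ j)
      (cond_singleton_of_notMem (s := {v : Fin m → ℕ | ∑ i, v i = c j}) .of_discrete hj)]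
  refine cond_singleton_eq_inv_ncard (contingencyTables_finite r c) (fun ξ hξ => hξ.1)
    ?_ (K := ν {ξ₀}) ?_ ?_ ?_ hξ₀
  · rintro ξ ⟨hrow, hnot⟩
    exact hν_not_col ξ (not_forall.1 fun hcol => hnot ⟨hrow, hcol⟩)
  · rw [hν_col _ hξ₀.2]
    refine mul_ne_zero (Finset.prod_ne_zero_iff.2 fun j _ => ?_)
      (ENNReal.ofReal_pos.2 (geomWeight_pos hαβ0 hαβ1 ξ₀)).ne'
    have := hcolprob j
    exact ENNReal.inv_ne_zero.2 (measure_ne_top _ _)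
  · rw [hν_col _ hξ₀.2]
    exact mul_ne_top (prod_ne_top fun j _ => inv_ne_top.2 (hpos j).ne') ofReal_ne_top
  · intro ξ hξ
    rw [hν_col _ hξ.2, hν_col _ hξ₀.2, geomWeight_eq_of_mem_contingencyTables hξ hξ₀]

/-- let the columns `C j` be independent, with `C j` distributed as a column of
independent geometric random variables (parameters `1 - α i * β j`) conditioned on having sum
`c j`.  Then the law of the resulting random table, conditioned on the event that all row sums
equal `r`, is uniform on the set of `(r,c)`-contingency tables. -/
theorem stmt_2 (m n : ℕ) (r : Fin m → ℕ) (c : Fin n → ℕ)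
    (hrc : ∑ i, r i = ∑ j, c j)
    (α : Fin m → ℝ) (β : Fin n → ℝ)
    (hαβ0 : ∀ i j, 0 < α i * β j) (hαβ1 : ∀ i j, α i * β j < 1)
    -- `μcol j` is the law of the `j`-th column of the array of independent geometrics
    (μcol : Fin n → Measure (Fin m → ℕ)) (hcolprob : ∀ j, IsProbabilityMeasure (μcol j))
    (hμcol : ∀ j, ∀ v : Fin m → ℕ,
      μcol j {v} = ∏ i, ENNReal.ofReal ((1 - α i * β j) * (α i * β j) ^ (v i)))
    -- the conditioning events have positive probability
    (hpos : ∀ j, 0 < μcol j {v | ∑ i, v i = c j})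
    -- `ν` is the joint law of the independent columns `C j`, where `C j` has the law of the
    -- `j`-th column conditioned on its sum being `c j`
    (ν : Measure (Fin m → Fin n → ℕ)) [IsProbabilityMeasure ν]
    (hν : ∀ ξ : Fin m → Fin n → ℕ,
      ν {ξ} = ∏ j, (μcol j)[|{v | ∑ i, v i = c j}] {fun i => ξ i j}) :
    ∀ ξ ∈ contingencyTables m n r c,
      ν[|{ξ : Fin m → Fin n → ℕ | ∀ i, ∑ j, ξ i j = r i}] {ξ}
        = ((contingencyTables m n r c).ncard : ℝ≥0∞)⁻¹ :=
  stmt_2_general m n r c α β hαβ0 hαβ1 μcol hcolprob hμcol hpos ν hν
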